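/- arXiv:2411.19202 — 8 statements merged into one kernel-verified Lean document; each statement's English description precedes it below -/
import Mathlib

section
/- Let p > 2 be a prime, let f(X) = αX² + βX + γ be a quadratic polynomial over F_p with α ≠ 0, and let S = {(x,y) ∈ F_p² : y < f(x)}. Then for every d ∈ F_p with d ≠ 0 and every b ∈ F_p, pr_{S,d}(b) = pr_{S,1}( b − (β − (d+1)/2)·(d−1)/(2α) ). In particular, for all nonzero d the projection functions pr_{S,d} are cyclic shifts of pr_{S,1}. -/
/-!
Write `[u < v]` for the indicator of `u.val < v.val`. Wrapping around modulo `p` gives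
`(u - v).val + v.val = u.val + p · [u < v]`, so summing over `x` with `u = d x + b`, `v = f x`,
`p · pr_{S,d}(b) = ∑ₓ (d x + b - f x).val + ∑ₓ (f x).val - ∑ₓ (d x + b).val`.
For `d ≠ 0` the last sum is `∑ₓ x.val`, independent of `d` and `b`. The first sum is unchanged
under the substitution `x ↦ x + (d - 1)/(2α)`, which turns the line minus the parabola in
direction `d` into the line minus the parabola in direction `1`, with the shifted intercept.
-/

open Finset

/-- The projection function of the set `S = {(x,y) : y < f(x)}` from direction `d`:
`pr p f d b` is the number of points of `S` on the line `Y = d X + b`. -/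
def parabolaProj (p : ℕ) [NeZero p] (f : ZMod p → ZMod p) (d b : ZMod p) : ℕ :=
  (Finset.univ.filter fun x : ZMod p => (d * x + b).val < (f x).val).card

namespace ZMod

theorem val_sub_add_val {n : ℕ} [NeZero n] (a b : ZMod n) :
    (a - b).val + b.val = a.val + if a.val < b.val then n else 0 := by
  have hsum := congrArg val (sub_add_cancel a b)
  by_cases hlt : (a - b).val + b.val < n
  · rw [val_add_of_lt hlt] at hsum
    rw [if_neg (by omega)]
    omega
  · have hwrap := val_add_val_of_le (not_lt.mp hlt)
    rw [hsum] at hwrap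
    have := (a - b).val_lt
    rw [if_pos (by omega)]
    omega

theorem sum_val_mul_add {n : ℕ} [NeZero n] {d : ZMod n} (hd : IsUnit d) (b : ZMod n) :
    ∑ x : ZMod n, (d * x + b).val = ∑ x : ZMod n, x.val :=
  Fintype.sum_bijective (fun x => d * x + b)
    ((add_left_injective b).comp hd.mul_right_injective).bijective_of_finite _ _ fun _ => rfl

end ZMod

theorem mul_parabolaProj_add_sum_val {n : ℕ} [NeZero n] (f : ZMod n → ZMod n) (d b : ZMod n) :
    n * parabolaProj n f d b + ∑ x, (d * x + b).val =
      ∑ x, (d * x + b - f x).val + ∑ x, (f x).val := by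
  rw [parabolaProj, card_filter, mul_sum, ← sum_add_distrib, ← sum_add_distrib]
  refine sum_congr rfl fun x _ => ?_
  rw [ZMod.val_sub_add_val, mul_ite, mul_one, mul_zero, add_comm]

theorem mul_parabolaProj_add_sum_val_of_isUnit {n : ℕ} [NeZero n] (f : ZMod n → ZMod n)
    {d : ZMod n} (hd : IsUnit d) (b : ZMod n) :
    n * parabolaProj n f d b + ∑ x : ZMod n, x.val =
      ∑ x, (d * x + b - f x).val + ∑ x, (f x).val := by
  rw [← ZMod.sum_val_mul_add hd b, mul_parabolaProj_add_sum_val]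

theorem line_sub_quadratic_comp_add {K : Type*} [Field K] (h2 : (2 : K) ≠ 0) {α d s : K}
    (hs : 2 * α * s = d - 1) (β γ b y : K) :
    d * (y + s) + b - (α * (y + s) ^ 2 + β * (y + s) + γ) =
      1 * y + (b - (β - (d + 1) / 2) * s) - (α * y ^ 2 + β * y + γ) := by
  field_simp
  linear_combination (-(2 * y + s)) * hs

/-- For every nonzero direction `d`, the projection function of the set of points below
the parabola `Y = αX² + βX + γ` is a cyclic shift of the projection function from
direction `1`:  `pr_{S,d}(b) = pr_{S,1}(b − (β − (d+1)/2)·(d−1)/(2α))`. -/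
theorem proj_below_parabola_shift (p : ℕ) [Fact p.Prime] (hp : 2 < p)
    (α β γ : ZMod p) (hα : α ≠ 0) (d : ZMod p) (hd : d ≠ 0) (b : ZMod p) :
    parabolaProj p (fun x => α * x ^ 2 + β * x + γ) d b =
      parabolaProj p (fun x => α * x ^ 2 + β * x + γ) 1
        (b - (β - (d + 1) / 2) * ((d - 1) / (2 * α))) := by
  set f : ZMod p → ZMod p := fun x => α * x ^ 2 + β * x + γ
  set s := (d - 1) / (2 * α)
  have h2 : (2 : ZMod p) ≠ 0 := by
    rw [← Nat.cast_ofNat, Ne, ZMod.natCast_eq_zero_iff]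
    exact fun h => by linarith [Nat.le_of_dvd two_pos h]
  have hs : 2 * α * s = d - 1 := mul_div_cancel₀ _ (mul_ne_zero h2 hα)
  have hshift : ∑ y, (1 * y + (b - (β - (d + 1) / 2) * s) - f y).val =
      ∑ x, (d * x + b - f x).val :=
    Fintype.sum_equiv (Equiv.addRight s) _ _ fun y => by
      simp only [Equiv.coe_addRight, f]
      rw [line_sub_quadratic_comp_add h2 hs]
  have hcount := mul_parabolaProj_add_sum_val_of_isUnit f hd.isUnit b
  rw [← hshift, ← mul_parabolaProj_add_sum_val_of_isUnit f isUnit_one, add_left_inj] at hcount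
  exact Nat.eq_of_mul_eq_mul_left (Fact.out : p.Prime).pos hcount
end

section
/- Let p > 2 be a prime, let f(X) = αX² + βX + γ be a quadratic polynomial over F_p with α ≠ 0, and let S = {(x,y) ∈ F_p² : y < f(x)}. Then for every nonzero d ∈ F_p, the image of the projection function pr_{S,d} is an interval of integers: every integer k with (min_{b} pr_{S,d}(b)) ≤ k ≤ (max_{b} pr_{S,d}(b)) is attained as pr_{S,d}(b) for some b ∈ F_p. -/
/-!
Moving the line `Y = dX + b` up by one (`b ↦ b + 1`) raises every point `dx + b` of it by one,
which preserves the strict inequality `dx + b < f(x)` except at the single `x` where `dx + b + 1`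
wraps around to `0`. Hence the projection function grows by at most one per step, and walking
from a minimiser to a maximiser through `b, b + 1, b + 2, …` hits every intermediate value.
-/

open Finset

theorem Nat.exists_eq_of_map_add_one_le {g : ℕ → ℕ} (hg : ∀ n, g (n + 1) ≤ g n + 1) {k : ℕ}
    (h₀ : g 0 ≤ k) : ∀ {m}, k ≤ g m → ∃ i ≤ m, g i = k
  | 0, hm => ⟨0, le_rfl, le_antisymm h₀ hm⟩
  | m + 1, hm => by
    by_cases hk : k ≤ g m
    · obtain ⟨i, him, hi⟩ := Nat.exists_eq_of_map_add_one_le hg h₀ hk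
      exact ⟨i, him.trans m.le_succ, hi⟩
    · exact ⟨m + 1, le_rfl, le_antisymm (by have := hg m; omega) hm⟩

theorem ZMod.exists_eq_of_map_add_one_le {n : ℕ} [NeZero n] {P : ZMod n → ℕ}
    (hP : ∀ b, P (b + 1) ≤ P b + 1) {b₀ b₁ : ZMod n} {k : ℕ} (h₀ : P b₀ ≤ k) (h₁ : k ≤ P b₁) :
    ∃ b, P b = k := by
  have hstep (m : ℕ) : P (b₀ + (m + 1 : ℕ)) ≤ P (b₀ + m) + 1 := by
    simpa only [Nat.cast_succ, add_assoc] using hP (b₀ + m)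
  have hreach : P (b₀ + ((b₁ - b₀).val : ℕ)) = P b₁ := by
    rw [ZMod.natCast_zmod_val, add_sub_cancel]
  obtain ⟨i, -, hi⟩ := Nat.exists_eq_of_map_add_one_le (g := fun m => P (b₀ + m)) hstep
    (by simpa using h₀) (hreach ▸ h₁)
  exact ⟨_, hi⟩

theorem ZMod.val_le_val_add_one {n : ℕ} [NeZero n] {u : ZMod n} (hu : u + 1 ≠ 0) :
    u.val ≤ (u + 1).val := by
  rcases lt_or_ge (u.val + (1 : ZMod n).val) n with hlt | hge
  · rw [ZMod.val_add_of_lt hlt]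
    exact Nat.le_add_right _ _
  · have hwrap := ZMod.val_add_val_of_le hge
    rw [ZMod.val_one_eq_one_mod] at hwrap
    have : (u + 1).val = 0 := by
      have := u.val_lt
      have := Nat.mod_le 1 n
      omega
    exact absurd ((ZMod.val_eq_zero _).mp this) hu

theorem card_filter_val_add_one_lt_le {α : Type*} [Fintype α] [DecidableEq α] {n : ℕ} [NeZero n]
    {u : α → ZMod n} (hu : Function.Injective u) (v : α → ℕ) :
    #{x | (u x + 1).val < v x} ≤ #{x | (u x).val < v x} + 1 := by
  have hsub : ({x | (u x + 1).val < v x} : Finset α) ⊆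
      ({x | (u x).val < v x} : Finset α) ∪ ({x | u x + 1 = 0} : Finset α) := by
    intro x
    simp only [mem_union, mem_filter, mem_univ, true_and]
    intro hx
    by_cases hwrap : u x + 1 = 0
    · exact .inr hwrap
    · exact .inl ((ZMod.val_le_val_add_one hwrap).trans_lt hx)
  have hwrap_subsingleton : #({x | u x + 1 = 0} : Finset α) ≤ 1 := by
    refine card_le_one.mpr fun x hx y hy => hu ?_
    simp only [mem_filter, mem_univ, true_and] at hx hy
    exact add_right_cancel (hx.trans hy.symm)
  calc #{x | (u x + 1).val < v x}
      ≤ #(({x | (u x).val < v x} : Finset α) ∪ ({x | u x + 1 = 0} : Finset α)) :=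
        card_le_card hsub
    _ ≤ #{x | (u x).val < v x} + #({x | u x + 1 = 0} : Finset α) := card_union_le _ _
    _ ≤ #{x | (u x).val < v x} + 1 := Nat.add_le_add_left hwrap_subsingleton _

theorem parabolaProj_add_one_le {p : ℕ} [Fact p.Prime] (f : ZMod p → ZMod p) {d : ZMod p}
    (hd : d ≠ 0) (b : ZMod p) : parabolaProj p f d (b + 1) ≤ parabolaProj p f d b + 1 := by
  simpa only [parabolaProj, add_assoc, Function.comp_apply] using
    card_filter_val_add_one_lt_le ((add_left_injective b).comp (mul_right_injective₀ hd))
      fun x => (f x).val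

theorem proj_below_parabola_image_interval_general (p : ℕ) [Fact p.Prime]
    (α β γ : ZMod p) (d : ZMod p) (hd : d ≠ 0) (k : ℕ)
    (hmin : (Finset.univ.image (parabolaProj p (fun x => α * x ^ 2 + β * x + γ) d)).min'
      (Finset.image_nonempty.mpr Finset.univ_nonempty) ≤ k)
    (hmax : k ≤ (Finset.univ.image (parabolaProj p (fun x => α * x ^ 2 + β * x + γ) d)).max'
      (Finset.image_nonempty.mpr Finset.univ_nonempty)) :
    ∃ b : ZMod p, parabolaProj p (fun x => α * x ^ 2 + β * x + γ) d b = k := by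
  set P := parabolaProj p (fun x => α * x ^ 2 + β * x + γ) d
  obtain ⟨bmin, -, hbmin⟩ := mem_image.mp (min'_mem (univ.image P) _)
  obtain ⟨bmax, -, hbmax⟩ := mem_image.mp (max'_mem (univ.image P) _)
  exact ZMod.exists_eq_of_map_add_one_le (parabolaProj_add_one_le _ hd)
    (hbmin.symm ▸ hmin) (hbmax.symm ▸ hmax)

/-- For every nonzero direction `d`, the image of the projection function of the set of
points below the parabola `Y = αX² + βX + γ` is an interval of integers: every `k`
between the minimum and the maximum value is attained. -/
theorem proj_below_parabola_image_interval (p : ℕ) [Fact p.Prime] (hp : 2 < p)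
    (α β γ : ZMod p) (hα : α ≠ 0) (d : ZMod p) (hd : d ≠ 0) (k : ℕ)
    (hmin : (Finset.univ.image (parabolaProj p (fun x => α * x ^ 2 + β * x + γ) d)).min'
      (Finset.image_nonempty.mpr Finset.univ_nonempty) ≤ k)
    (hmax : k ≤ (Finset.univ.image (parabolaProj p (fun x => α * x ^ 2 + β * x + γ) d)).max'
      (Finset.image_nonempty.mpr Finset.univ_nonempty)) :
    ∃ b : ZMod p, parabolaProj p (fun x => α * x ^ 2 + β * x + γ) d b = k :=
  proj_below_parabola_image_interval_general p α β γ d hd k hmin hmax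
end

section
/- Let p > 2 be a prime, let f(X) = αX² + βX + γ be a quadratic polynomial over F_p with α ≠ 0, and let S = {(x,y) ∈ F_p² : y < f(x)}. Then for every b ∈ F_p, the difference of consecutive values of the projection function from direction 1 satisfies pr_{S,1}(b+1) − pr_{S,1}(b) = −χ( (β−1)² + 4α(b+1−γ) ), as an equality of integers, where χ is the quadratic character of F_p. -/
open Finset

namespace ZMod

variable {n : ℕ} [NeZero n]

theorem val_neg_one' : (-1 : ZMod n).val = n - 1 := by
  obtain ⟨m, rfl⟩ := Nat.exists_eq_succ_of_ne_zero (NeZero.ne n)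
  simp

theorem val_add_one_of_ne_neg_one {y : ZMod n} (hy : y ≠ -1) : (y + 1).val = y.val + 1 := by
  obtain ⟨m, rfl⟩ := Nat.exists_eq_succ_of_ne_zero (NeZero.ne n)
  have hym : y.val ≠ m := fun h => hy (val_injective _ (by simp [h]))
  have hlt : y.val < m := by have := y.val_lt; omega
  rw [val_add_of_lt, val_one_eq_one_mod, Nat.mod_eq_of_lt (by omega)]
  rw [val_one_eq_one_mod, Nat.mod_eq_of_lt (by omega)]
  omega

theorem ite_val_add_one_lt_add_ite_eq (y z : ZMod n) :
    ((if (y + 1).val < z.val then 1 else 0) + if z = y + 1 then 1 else 0) =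
      (if y.val < z.val then 1 else 0) + if y = -1 then 1 else 0 := by
  by_cases hy : y = -1
  · have hz : z.val ≤ n - 1 := by have := z.val_lt; omega
    subst hy
    simp only [neg_add_cancel, val_zero, val_neg_one', val_pos, not_lt.mpr hz]
    by_cases hz0 : z = 0 <;> simp [hz0]
  · have hval : z = y + 1 ↔ z.val = y.val + 1 := by
      rw [← val_add_one_of_ne_neg_one hy]
      exact (val_injective n).eq_iff.symm
    simp only [val_add_one_of_ne_neg_one hy, if_neg hy, hval]
    split_ifs <;> omega

theorem card_filter_val_add_one_lt {α : Type*} [Fintype α] (g f : α → ZMod n) :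
    #{x | (g x + 1).val < (f x).val} + #{x | f x = g x + 1} =
      #{x | (g x).val < (f x).val} + #{x | g x = -1} := by
  simp only [card_filter, ← sum_add_distrib]
  exact sum_congr rfl fun x _ => ite_val_add_one_lt_add_ite_eq (g x) (f x)

end ZMod

theorem parabolaProj_add_one {p : ℕ} [NeZero p] (f : ZMod p → ZMod p) {d : ZMod p}
    (hd : IsUnit d) (b : ZMod p) :
    parabolaProj p f d (b + 1) + #{x | f x = d * x + b + 1} = parabolaProj p f d b + 1 := by
  have hwrap : #{x : ZMod p | d * x + b = -1} = 1 := by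
    refine card_eq_one.mpr ⟨↑hd.unit⁻¹ * (-1 - b), ?_⟩
    ext x
    simp only [mem_filter, mem_univ, true_and, mem_singleton]
    rw [← eq_sub_iff_add_eq, hd.unit.eq_inv_mul_iff_mul_eq, IsUnit.unit_spec, eq_comm]
  simp only [parabolaProj, ← add_assoc]
  rw [ZMod.card_filter_val_add_one_lt, hwrap]

theorem card_filter_quadratic_eq_zero {F : Type*} [Field F] [Fintype F] [DecidableEq F]
    (hF : ringChar F ≠ 2) {a : F} (ha : a ≠ 0) (b c : F) :
    (#{x | a * (x * x) + b * x + c = 0} : ℤ) = quadraticChar F (discrim a b c) + 1 := by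
  have : NeZero (2 : F) := ⟨Ring.two_ne_zero hF⟩
  rw [← quadraticChar_card_sqrts hF, Set.toFinset_ofPred]
  congr 1
  refine card_equiv ((Equiv.mulLeft₀ (2 * a) (mul_ne_zero two_ne_zero ha)).trans
    (Equiv.addRight b)) fun x => ?_
  simp [quadratic_eq_zero_iff_discrim_eq_sq ha, eq_comm]

/-- The difference of consecutive values of the projection function from direction `1` of
the set of points below the parabola `Y = αX² + βX + γ` equals
`−χ((β−1)² + 4α(b+1−γ))`, where `χ` is the quadratic character of `F_p`. -/
theorem proj_below_parabola_consecutive_diff (p : ℕ) [Fact p.Prime] (hp : 2 < p)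
    (α β γ : ZMod p) (hα : α ≠ 0) (b : ZMod p) :
    (parabolaProj p (fun x => α * x ^ 2 + β * x + γ) 1 (b + 1) : ℤ) -
      (parabolaProj p (fun x => α * x ^ 2 + β * x + γ) 1 b : ℤ) =
      - quadraticChar (ZMod p) ((β - 1) ^ 2 + 4 * α * (b + 1 - γ)) := by
  have hchar : ringChar (ZMod p) ≠ 2 := by rw [ZMod.ringChar_zmod_n]; omega
  have hrec := parabolaProj_add_one (fun x => α * x ^ 2 + β * x + γ) isUnit_one b
  have hroots : #{x : ZMod p | α * x ^ 2 + β * x + γ = 1 * x + b + 1} =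
      #{x : ZMod p | α * (x * x) + (β - 1) * x + (γ - (b + 1)) = 0} := by
    congr 1
    refine filter_congr fun x _ => ?_
    rw [← sub_eq_zero, show α * x ^ 2 + β * x + γ - (1 * x + b + 1) =
      α * (x * x) + (β - 1) * x + (γ - (b + 1)) by ring]
  have hdiscrim : discrim α (β - 1) (γ - (b + 1)) = (β - 1) ^ 2 + 4 * α * (b + 1 - γ) := by
    rw [discrim]; ring
  have hcount := card_filter_quadratic_eq_zero hchar hα (β - 1) (γ - (b + 1))
  rw [hroots] at hrec
  rw [hdiscrim] at hcount
  omega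
end

section
/- Let p > 2 be a prime and let f be a quadratic polynomial over F_p (degree exactly 2). Then the image of f contains at least (p−5)/4 pairs of consecutive elements; that is, the number of x ∈ F_p such that x and x+1 both lie in the image f(F_p) and x+1 ≠ 0 is at least (p−5)/4 (as a real-number inequality). -/
/-!
Completing the square, the image of `f` is `{a u² + γ}` with `a ≠ 0`, and `a u² + γ`, `a v² + γ`
are consecutive exactly when `(u, v)` lies on the hyperbola `v² - u² = a⁻¹`. Factoring
`v² - u² = (v - u)(v + u)` shows that this hyperbola has `p - 1` points, and at most four of them
give the same value `a u² + γ` (the signs of `u` and `v`). Hence at least `(p - 1) / 4` values `x`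
have `x + 1` in the image as well, and discarding `x = -1` leaves `(p - 5) / 4`.
-/

open Finset Polynomial

theorem Polynomial.card_nthRootsFinset_le {R : Type*} [CommRing R] [IsDomain R] (n : ℕ) (a : R) :
    #(nthRootsFinset n a) ≤ n := by
  classical
  rw [nthRootsFinset_def]
  exact (Multiset.toFinset_card_le _).trans (card_nthRoots n a)

theorem Polynomial.exists_eval_eq_mul_add_sq_add {K : Type*} [Field K] {f : K[X]}
    (h2 : (2 : K) ≠ 0) (hf : f.natDegree = 2) :
    ∃ a ≠ 0, ∃ β γ : K, ∀ y, f.eval y = a * (y + β) ^ 2 + γ := by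
  have ha : f.coeff 2 ≠ 0 := by
    rw [← hf, coeff_natDegree, leadingCoeff_ne_zero]
    rintro rfl
    simp at hf
  let β := f.coeff 1 / (2 * f.coeff 2)
  refine ⟨f.coeff 2, ha, β, f.coeff 0 - f.coeff 2 * β ^ 2, fun y => ?_⟩
  rw [eval_eq_sum_range, hf]
  simp only [sum_range_succ, sum_range_zero, β]
  field_simp
  ring

section Hyperbola

variable {K : Type*} [Field K] [Fintype K] [DecidableEq K]

def hyperbola (c : K) : Finset (K × K) := {z | z.2 ^ 2 - z.1 ^ 2 = c}

@[simp]
theorem mem_hyperbola {c : K} {z : K × K} : z ∈ hyperbola c ↔ z.2 ^ 2 - z.1 ^ 2 = c := by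
  simp [hyperbola]

/-- `(u, v) ↦ v - u` is a bijection onto the nonzero elements, as `v + u = c / (v - u)`. -/
theorem card_hyperbola (h2 : (2 : K) ≠ 0) {c : K} (hc : c ≠ 0) :
    #(hyperbola c) = Fintype.card K - 1 := by
  have hne : ∀ z ∈ hyperbola c, z.2 - z.1 ≠ 0 := by
    intro z hz h
    rw [mem_hyperbola, sub_eq_zero.mp h, sub_self] at hz
    exact hc hz.symm
  rw [← card_univ, ← card_erase_of_mem (mem_univ 0)]
  refine card_nbij' (fun z => z.2 - z.1) (fun w => ((c / w - w) / 2, (c / w + w) / 2))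
    (fun z hz => by simpa using hne z hz) ?_ ?_ ?_
  · intro w hw
    simp only [mem_coe, mem_erase, mem_univ, and_true] at hw
    simp only [mem_coe, mem_hyperbola]
    field_simp
    ring
  · intro z hz
    have hsum : z.2 + z.1 = c / (z.2 - z.1) := by
      rw [eq_div_iff (hne z hz)]
      linear_combination (mem_hyperbola.mp hz)
    ext <;> simp only [← hsum] <;> field_simp <;> ring
  · intro w hw
    simp only [mem_coe, mem_erase, mem_univ, and_true] at hw
    field_simp
    ring

theorem card_hyperbola_le_four_mul_card_image_sq (c : K) :
    #(hyperbola c) ≤ 4 * #((hyperbola c).image fun z => z.1 ^ 2) := by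
  refine card_le_mul_card_image _ 4 fun t _ => ?_
  calc #{z ∈ hyperbola c | z.1 ^ 2 = t}
      ≤ #(nthRootsFinset 2 t ×ˢ nthRootsFinset 2 (t + c)) := by
        refine card_le_card fun z hz => ?_
        simp only [mem_filter, mem_hyperbola] at hz
        simp only [mem_product, mem_nthRootsFinset two_pos]
        exact ⟨hz.2, by linear_combination hz.1 + hz.2⟩
    _ ≤ 2 * 2 := by
        rw [card_product]
        exact Nat.mul_le_mul (card_nthRootsFinset_le 2 t) (card_nthRootsFinset_le 2 _)

end Hyperbola

/-- The image of a quadratic polynomial over `F_p` contains at least `(p−5)/4` pairs of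
consecutive elements: there are at least `(p−5)/4` elements `x` such that `x` and `x+1`
both lie in the image and `x + 1 ≠ 0`. -/
theorem image_quadratic_consecutive_pairs (p : ℕ) [Fact p.Prime] (hp : 2 < p)
    (f : Polynomial (ZMod p)) (hf : f.natDegree = 2) :
    ((p : ℝ) - 5) / 4 ≤
      ({x : ZMod p | (∃ y, f.eval y = x) ∧ (∃ y, f.eval y = x + 1) ∧ x + 1 ≠ 0}.ncard : ℝ) := by
  set X := {x : ZMod p | (∃ y, f.eval y = x) ∧ (∃ y, f.eval y = x + 1) ∧ x + 1 ≠ 0}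
  have h2 : (2 : ZMod p) ≠ 0 := by
    refine Ring.two_ne_zero ?_
    rw [ZMod.ringChar_zmod_n]
    omega
  obtain ⟨a, ha, β, γ, hf_sq⟩ := exists_eval_eq_mul_add_sq_add h2 hf
  have hmem_range : ∀ u, ∃ y, f.eval y = a * u ^ 2 + γ := fun u => ⟨u - β, by rw [hf_sq]; ring⟩
  set T := (hyperbola a⁻¹).image fun z => z.1 ^ 2
  have hT_sub : (fun t => a * t + γ) '' T ⊆ insert (-1) X := by
    rintro _ ⟨_, ht, rfl⟩
    obtain ⟨z, hz, rfl⟩ := mem_image.mp ht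
    by_cases hx : a * z.1 ^ 2 + γ + 1 = 0
    · exact Or.inl (eq_neg_of_add_eq_zero_left hx)
    · obtain ⟨y, hy⟩ := hmem_range z.2
      refine Or.inr ⟨hmem_range z.1, ⟨y, ?_⟩, hx⟩
      rw [hy]
      linear_combination a * mem_hyperbola.mp hz + mul_inv_cancel₀ ha
  have hT_card : p - 1 ≤ 4 * #T := by
    have := card_hyperbola_le_four_mul_card_image_sq (a⁻¹)
    rwa [card_hyperbola h2 (inv_ne_zero ha), ZMod.card] at this
  have hX_card : #T ≤ X.ncard + 1 :=
    calc #T = ((fun t => a * t + γ) '' T).ncard := by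
          have hinj : Function.Injective fun t => a * t + γ :=
            (add_left_injective γ).comp (mul_right_injective₀ ha)
          rw [Set.ncard_image_of_injective _ hinj, Set.ncard_coe_finset]
      _ ≤ (insert (-1) X).ncard := Set.ncard_le_ncard hT_sub
      _ ≤ X.ncard + 1 := Set.ncard_insert_le _ _
  rw [div_le_iff₀ four_pos]
  have hp_le : (p : ℝ) ≤ 4 * #T + 1 := by exact_mod_cast (by omega : p ≤ 4 * #T + 1)
  have hT_le : (#T : ℝ) ≤ X.ncard + 1 := by exact_mod_cast hX_card
  linarith
end

section
/- Let p be an odd prime and let n be the number of non-squares of F_p whose least nonnegative residue lies in the interval [1, (p−1)/2]. Then |n − (p−1)/4| ≤ (1/2)·√p·ln(p) over the real numbers. -/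
/-!
A Pólya–Vinogradov argument. With `χ` the Legendre symbol and `H = (p - 1) / 2`, the count is
`n = (H - T) / 2` where `T = ∑_{x=1}^{H} χ x`. Multiplying `T` by the Gauss sum `τ`, `|τ| = √p`,
turns it into `∑_k χ k ∑_{x=1}^{H} e(kx/p)`. Each inner geometric sum has norm at most
`2 / |e(k/p) - 1| ≤ p / (2|k|)` by Jordan's inequality `sin t ≥ 2t/π`, with `|k|` the least
absolute residue, and `∑_{k≠0} p / (2|k|) = p ∑_{j=1}^{H} 1/j ≤ p log (2H + 1) = p log p`.
-/

open Finset Real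

lemma two_div_le_log_one_add_inv {a : ℝ} (ha : 0 < a) : 2 / (2 * a + 1) ≤ log (1 + a⁻¹) := by
  have h := le_hasSum (hasSum_log_one_add_inv ha) 0 fun k _ => by positivity
  simpa [div_eq_mul_inv] using h

lemma sum_Icc_inv_le_log (m : ℕ) : ∑ j ∈ Icc 1 m, (j : ℝ)⁻¹ ≤ log (2 * m + 1) := by
  induction m with
  | zero => simp
  | succ m ih =>
    have hstep := two_div_le_log_one_add_inv (a := m + 1 / 2) (by positivity)
    have hpos : (0 : ℝ) < 2 * m + 1 := by positivity
    have hlog : log (2 * (m + 1 : ℕ) + 1) = log (2 * m + 1) + log (1 + (m + 1 / 2 : ℝ)⁻¹) := by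
      rw [← log_mul hpos.ne' (by positivity)]
      congr 1
      field_simp
      push_cast
      ring
    rw [sum_Icc_succ_top (by omega), hlog]
    have : (2 : ℝ) / (2 * (m + 1 / 2) + 1) = ((m + 1 : ℕ) : ℝ)⁻¹ := by
      push_cast; field_simp; ring
    linarith

lemma norm_sum_Icc_pow_mul_norm_sub_one_le {K : Type*} [NormedField K] {z : K} (hz : ‖z‖ = 1)
    (H : ℕ) : ‖∑ m ∈ Icc 1 H, z ^ m‖ * ‖z - 1‖ ≤ 2 := by
  rw [← norm_mul, ← Ico_add_one_right_eq_Icc, geom_sum_Ico_mul z (by omega)]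
  calc ‖z ^ (H + 1) - z ^ 1‖ ≤ ‖z ^ (H + 1)‖ + ‖z ^ 1‖ := norm_sub_le _ _
    _ = 2 := by simp only [norm_pow, hz, one_pow, pow_one]; norm_num

lemma four_mul_abs_valMinAbs_div_le_norm_stdAddChar_sub_one {N : ℕ} [NeZero N] (k : ZMod N) :
    4 * |(k.valMinAbs : ℝ)| / N ≤ ‖ZMod.stdAddChar k - 1‖ := by
  have hN : (0 : ℝ) < N := by have := NeZero.pos N; exact_mod_cast this
  have hv : |(k.valMinAbs : ℝ)| ≤ N / 2 := by
    have h : (-N : ℝ) < k.valMinAbs * 2 ∧ (k.valMinAbs * 2 : ℝ) ≤ N := by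
      exact_mod_cast k.valMinAbs_mem_Ioc
    exact abs_le.mpr ⟨by linarith, by linarith⟩
  have hθ : |π * k.valMinAbs / N| ≤ π / 2 := by
    rw [abs_div, abs_mul, abs_of_pos pi_pos, abs_of_pos hN, div_le_iff₀ hN]
    nlinarith [pi_pos]
  conv_rhs => rw [← k.coe_valMinAbs, ZMod.stdAddChar_coe]
  have harg : 2 * π * Complex.I * (k.valMinAbs : ℤ) / N =
      Complex.I * ((2 * (π * k.valMinAbs / N) : ℝ) : ℂ) := by
    push_cast
    ring
  rw [harg, Complex.norm_exp_I_mul_ofReal_sub_one, mul_div_cancel_left₀ _ two_ne_zero, norm_mul,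
    Real.norm_eq_abs, Real.norm_eq_abs]
  have := mul_abs_le_abs_sin hθ
  rw [abs_div, abs_mul, abs_of_pos pi_pos, abs_of_pos hN] at this
  rw [abs_two]
  calc 4 * |(k.valMinAbs : ℝ)| / N = 2 * (2 / π * (π * |(k.valMinAbs : ℝ)| / N)) := by
        field_simp; ring
    _ ≤ _ := by gcongr

section HalfInterval

variable {p : ℕ} [NeZero p]

def halfInterval (p : ℕ) [NeZero p] : Finset (ZMod p) :=
  univ.filter fun x => 1 ≤ x.val ∧ x.val ≤ (p - 1) / 2

lemma sum_halfInterval_val {M : Type*} [AddCommMonoid M] (f : ℕ → M) :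
    ∑ x ∈ halfInterval p, f x.val = ∑ j ∈ Icc 1 ((p - 1) / 2), f j := by
  have hp := NeZero.pos p
  refine sum_nbij' ZMod.val (fun j => (j : ZMod p)) ?_ ?_ ?_ ?_ ?_
  · intro x hx
    simpa [halfInterval] using hx
  · intro j hj
    simp only [mem_Icc] at hj
    simp [halfInterval, ZMod.val_natCast_of_lt (show j < p by omega), hj]
  · intro x _
    exact ZMod.natCast_zmod_val x
  · intro j hj
    simp only [mem_Icc] at hj
    exact ZMod.val_natCast_of_lt (by omega)
  · intro x _
    rfl

lemma card_halfInterval : #(halfInterval p) = (p - 1) / 2 := by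
  simpa using sum_halfInterval_val (p := p) fun _ => (1 : ℕ)

lemma ne_zero_of_mem_halfInterval {x : ZMod p} (hx : x ∈ halfInterval p) : x ≠ 0 := by
  rintro rfl
  simp [halfInterval] at hx

lemma valMinAbs_of_mem_halfInterval {x : ZMod p} (hx : x ∈ halfInterval p) :
    x.valMinAbs = x.val := by
  simp only [halfInterval, mem_filter, mem_univ, true_and] at hx
  rw [ZMod.valMinAbs_def_pos, if_pos (by omega)]

lemma sum_eq_sum_halfInterval_add_neg (hp : Odd p) {M : Type*} [AddCommMonoid M]
    {f : ZMod p → M} (hf : f 0 = 0) : ∑ k, f k = ∑ x ∈ halfInterval p, (f x + f (-x)) := by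
  have hp2 := Nat.odd_iff.mp hp
  rw [sum_add_distrib, ← sum_filter_add_sum_filter_not univ (· ∈ halfInterval p),
    filter_mem_eq_inter, univ_inter]
  congr 1
  refine sum_bij_ne_zero (fun k _ _ => -k) ?_ ?_ ?_ ?_
  · intro k hk hfk
    have hk0 : k ≠ 0 := by rintro rfl; exact hfk hf
    simp only [halfInterval, mem_filter, mem_univ, true_and, not_and, not_le] at hk ⊢
    have := ZMod.val_lt k
    have := ZMod.val_pos.mpr hk0
    rw [ZMod.neg_val, if_neg hk0]
    omega
  · intro a _ _ b _ _ h
    exact neg_injective h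
  · intro x hx hfx
    refine ⟨-x, ?_, ?_, neg_neg x⟩
    · have hx0 := ne_zero_of_mem_halfInterval hx
      simp only [halfInterval, mem_filter, mem_univ, true_and, not_and, not_le] at hx ⊢
      rw [ZMod.neg_val, if_neg hx0]
      omega
    · exact hfx
  · intro k _ _
    rw [neg_neg]

lemma sum_halfInterval_stdAddChar_mul (k : ZMod p) :
    ∑ x ∈ halfInterval p, ZMod.stdAddChar (k * x) =
      ∑ m ∈ Icc 1 ((p - 1) / 2), ZMod.stdAddChar k ^ m := by
  have hpow (x : ZMod p) : ZMod.stdAddChar (k * x) = ZMod.stdAddChar k ^ x.val := by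
    rw [← AddChar.map_nsmul_eq_pow, nsmul_eq_mul, ZMod.natCast_zmod_val, mul_comm]
  simp_rw [hpow]
  exact sum_halfInterval_val _

lemma norm_sum_halfInterval_stdAddChar_mul_le {k : ZMod p} (hk : k ≠ 0) :
    ‖∑ x ∈ halfInterval p, ZMod.stdAddChar (k * x)‖ ≤ p / (2 * |(k.valMinAbs : ℝ)|) := by
  have hv : 0 < |(k.valMinAbs : ℝ)| := by
    simpa [abs_pos, Int.cast_ne_zero, ZMod.valMinAbs_eq_zero] using hk
  have hp : (0 : ℝ) < p := by have := NeZero.pos p; exact_mod_cast this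
  have hgeom := norm_sum_Icc_pow_mul_norm_sub_one_le (z := ZMod.stdAddChar k)
    (by rw [ZMod.stdAddChar_apply, Circle.norm_coe]) ((p - 1) / 2)
  have hdist := four_mul_abs_valMinAbs_div_le_norm_stdAddChar_sub_one k
  rw [sum_halfInterval_stdAddChar_mul, le_div_iff₀ (by positivity)]
  set S := ‖∑ m ∈ Icc 1 ((p - 1) / 2), ZMod.stdAddChar k ^ m‖
  have : S * (4 * |(k.valMinAbs : ℝ)| / p) ≤ 2 :=
    (mul_le_mul_of_nonneg_left hdist (norm_nonneg _)).trans hgeom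
  rw [mul_div_assoc', div_le_iff₀ hp] at this
  linarith

/-- The `k = 0` summand is `p / 0 = 0`. -/
lemma sum_div_abs_valMinAbs_le (hp : Odd p) :
    ∑ k : ZMod p, (p : ℝ) / (2 * |(k.valMinAbs : ℝ)|) ≤ p * log p := by
  have hp2 := Nat.odd_iff.mp hp
  rw [sum_eq_sum_halfInterval_add_neg hp (by simp)]
  have hterm : ∀ x ∈ halfInterval p, (p : ℝ) / (2 * |(x.valMinAbs : ℝ)|) +
      p / (2 * |((-x).valMinAbs : ℝ)|) = p * (x.val : ℝ)⁻¹ := by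
    intro x hx
    rw [ZMod.valMinAbs_neg_of_ne_half (by omega), valMinAbs_of_mem_halfInterval hx]
    push_cast
    rw [abs_neg, Nat.abs_cast]
    ring
  rw [sum_congr rfl hterm, ← mul_sum, sum_halfInterval_val fun j => (j : ℝ)⁻¹]
  have hlog : log p = log (2 * ((p - 1) / 2 : ℕ) + 1) := by
    congr 1
    exact_mod_cast (by omega : p = 2 * ((p - 1) / 2) + 1)
  rw [hlog]
  gcongr
  exact sum_Icc_inv_le_log _

end HalfInterval

section GaussSum

variable {F : Type*} [Field F] [Fintype F]

lemma gaussSum_mulShift_eq_of_ne_one {R : Type*} [CommRing R] [IsDomain R] {χ : MulChar F R}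
    (hχ : χ ≠ 1) (ψ : AddChar F R) (x : F) :
    gaussSum χ (ψ.mulShift x) = χ⁻¹ x * gaussSum χ ψ := by
  rcases eq_or_ne x 0 with rfl | hx
  · simp [AddChar.mulShift_zero, gaussSum_one_right hχ, MulChar.map_zero]
  · simpa using gaussSum_mulShift_eq χ ψ (Units.mk0 x hx)

lemma sum_mul_gaussSum_inv {R : Type*} [CommRing R] [IsDomain R] {χ : MulChar F R}
    (hχ : χ ≠ 1) (ψ : AddChar F R) (S : Finset F) :
    (∑ x ∈ S, χ x) * gaussSum χ⁻¹ ψ = ∑ k, χ⁻¹ k * ∑ x ∈ S, ψ (k * x) := by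
  have hshift := gaussSum_mulShift_eq_of_ne_one (inv_ne_one.mpr hχ) ψ
  simp only [inv_inv] at hshift
  simp_rw [sum_mul, ← hshift, gaussSum, AddChar.mulShift_apply, mul_sum]
  rw [sum_comm]
  simp_rw [mul_comm]

lemma norm_gaussSum {χ : MulChar F ℂ} (hχ : χ ≠ 1) {ψ : AddChar F ℂ} (hψ : ψ.IsPrimitive) :
    ‖gaussSum χ ψ‖ = √(Fintype.card F) := by
  have h := gaussSum_mul_gaussSum_eq_card hχ hψ
  rw [← star_gaussSum_eq, Complex.star_def, Complex.mul_conj'] at h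
  rw [← Real.sqrt_sq (norm_nonneg _)]
  congr 1
  exact_mod_cast h

lemma sum_quadraticChar_eq_card_sub_two_mul_card_filter [DecidableEq F]
    [DecidablePred (IsSquare : F → Prop)] {S : Finset F} (hS : 0 ∉ S) :
    ∑ x ∈ S, (quadraticChar F x : ℝ) = #S - 2 * #(S.filter fun x => ¬IsSquare x) := by
  rw [← sum_filter_add_sum_filter_not S IsSquare, ← card_filter_add_card_filter_not IsSquare]
  have hsq : ∀ x ∈ S.filter IsSquare, (quadraticChar F x : ℝ) = 1 := by
    intro x hx
    rw [mem_filter] at hx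
    rw [(quadraticChar_one_iff_isSquare (ne_of_mem_of_not_mem hx.1 hS)).mpr hx.2, Int.cast_one]
  have hnsq : ∀ x ∈ S.filter (¬IsSquare ·), (quadraticChar F x : ℝ) = -1 := by
    intro x hx
    rw [quadraticChar_neg_one_iff_not_isSquare.mpr (mem_filter.mp hx).2]
    norm_num
  rw [sum_congr rfl hsq, sum_congr rfl hnsq]
  simp only [sum_const, nsmul_eq_mul, mul_one, Nat.cast_add]
  ring

end GaussSum

lemma norm_sum_halfInterval_le {p : ℕ} [Fact p.Prime] (hp : Odd p) {χ : DirichletCharacter ℂ p}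
    (hχ : χ ≠ 1) : ‖∑ x ∈ halfInterval p, χ x‖ ≤ √p * log p := by
  have hτ := norm_gaussSum (inv_ne_one.mpr hχ) (ZMod.isPrimitive_stdAddChar p)
  rw [ZMod.card] at hτ
  have hterm (k : ZMod p) : ‖χ⁻¹ k * ∑ x ∈ halfInterval p, ZMod.stdAddChar (k * x)‖ ≤
      p / (2 * |(k.valMinAbs : ℝ)|) := by
    rcases eq_or_ne k 0 with rfl | hk
    · simp [MulChar.map_zero]
    · rw [norm_mul]
      exact (mul_le_of_le_one_left (norm_nonneg _) (DirichletCharacter.norm_le_one _ k)).trans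
        (norm_sum_halfInterval_stdAddChar_mul_le hk)
  have hmain : ‖∑ x ∈ halfInterval p, χ x‖ * √p ≤ √p * (√p * log p) := by
    rw [← hτ, ← norm_mul, sum_mul_gaussSum_inv hχ, hτ, ← mul_assoc,
      Real.mul_self_sqrt (Nat.cast_nonneg p)]
    exact (norm_sum_le _ _).trans ((sum_le_sum fun k _ => hterm k).trans
      (sum_div_abs_valMinAbs_le hp))
  rw [mul_comm] at hmain
  exact le_of_mul_le_mul_left hmain
    (Real.sqrt_pos.mpr (by exact_mod_cast (Fact.out : p.Prime).pos))

lemma abs_sum_quadraticChar_halfInterval_le {p : ℕ} [Fact p.Prime] (hp : Odd p) :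
    |∑ x ∈ halfInterval p, (quadraticChar (ZMod p) x : ℝ)| ≤ √p * log p := by
  have hχ : (quadraticChar (ZMod p)).ringHomComp (Int.castRingHom ℂ) ≠ 1 := by
    rw [Ne, MulChar.ringHomComp_eq_one_iff Int.cast_injective]
    refine quadraticChar_ne_one ?_
    rw [ZMod.ringChar_zmod_n]
    exact hp.ne_two_of_dvd_nat dvd_rfl
  have := norm_sum_halfInterval_le hp hχ
  simp only [MulChar.ringHomComp_apply, eq_intCast] at this
  rw [← Int.cast_sum, Complex.norm_intCast] at this
  exact_mod_cast this

/-- If `n` is the number of non-squares of `F_p` whose least nonnegative residue lies in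
`[1, (p−1)/2]`, then `|n − (p−1)/4| ≤ (1/2)·√p·ln p`. -/
theorem nonsquares_in_half_interval (p : ℕ) [Fact p.Prime] (hp : Odd p) :
    |((Finset.univ.filter fun x : ZMod p =>
          ¬ IsSquare x ∧ 1 ≤ x.val ∧ x.val ≤ (p - 1) / 2).card : ℝ) -
        ((p : ℝ) - 1) / 4| ≤ (1 / 2) * Real.sqrt p * Real.log p := by
  have hnonsq : (Finset.univ.filter fun x : ZMod p =>
      ¬ IsSquare x ∧ 1 ≤ x.val ∧ x.val ≤ (p - 1) / 2) =
      (halfInterval p).filter fun x => ¬ IsSquare x := by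
    ext x
    simp only [mem_filter, mem_univ, true_and, halfInterval]
    tauto
  have hcount := sum_quadraticChar_eq_card_sub_two_mul_card_filter (S := halfInterval p)
    (fun h => ne_zero_of_mem_halfInterval h rfl)
  rw [card_halfInterval, ← hnonsq] at hcount
  have hhalf : (((p - 1) / 2 : ℕ) : ℝ) = ((p : ℝ) - 1) / 2 := by
    obtain ⟨m, rfl⟩ := hp
    simp
  have hT := abs_sum_quadraticChar_halfInterval_le hp
  rw [hcount, hhalf] at hT
  set N : ℝ := ((#{x : ZMod p | ¬IsSquare x ∧ 1 ≤ x.val ∧ x.val ≤ (p - 1) / 2} : ℕ) : ℝ)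
  rw [show N - ((p : ℝ) - 1) / 4 = -((((p : ℝ) - 1) / 2 - 2 * N) / 2) by ring, abs_neg, abs_div,
    abs_two]
  linarith
end

section
/- Let p > 2 be a prime, let α, γ ∈ F_p with α ≠ 0, set f(X) = αX² + γ, and let S = {(x,y) ∈ F_p² : y < f(x)}. Then the horizontal lines intersect S in at least (p+1)/2 different numbers of points; that is, the image of the projection function pr_{S,0}, i.e. the set {#{x ∈ F_p : b < f(x)} : b ∈ F_p} ⊆ ℕ, has cardinality at least (p+1)/2. -/
/-!
Raising the horizontal line `Y = b` past a value `f x₀` of `f` loses the point `x₀`, so the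
horizontal projection is strictly decreasing on the values of `f`, and it takes at least as many
values as `f`. A quadratic polynomial takes every value at most twice, hence at least `⌈p/2⌉`
values.
-/

open Finset Polynomial

section Projection

variable {n : ℕ} [NeZero n] (f : ZMod n → ZMod n)

theorem parabolaProj_zero_lt_of_val_lt {c : ZMod n} {x₀ : ZMod n} (h : c.val < (f x₀).val) :
    parabolaProj n f 0 (f x₀) < parabolaProj n f 0 c := by
  refine card_lt_card ⟨fun x hx => ?_, fun hsub => ?_⟩
  · simp only [mem_filter, zero_mul, zero_add] at hx ⊢
    exact ⟨hx.1, h.trans hx.2⟩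
  · have hx₀ := @hsub x₀ (by simpa using h)
    simp at hx₀

theorem parabolaProj_zero_injOn_range : Set.InjOn (parabolaProj n f 0) (Set.range f) := by
  rintro _ ⟨x, rfl⟩ _ ⟨x', rfl⟩ heq
  refine ZMod.val_injective n ?_
  by_contra hne
  rcases Nat.lt_or_gt_of_ne hne with h | h
  · exact (parabolaProj_zero_lt_of_val_lt f h).ne heq.symm
  · exact (parabolaProj_zero_lt_of_val_lt f h).ne heq

theorem card_image_le_card_image_parabolaProj_zero :
    #(univ.image f) ≤ #(univ.image (parabolaProj n f 0)) := by
  rw [← card_image_of_injOn ((parabolaProj_zero_injOn_range f).mono (by simp))]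
  exact card_le_card (image_subset_iff.mpr fun c _ => mem_image_of_mem _ (mem_univ c))

end Projection

theorem card_le_two_mul_card_image_quadratic {F : Type*} [Field F] [Fintype F] [DecidableEq F]
    {α : F} (hα : α ≠ 0) (γ : F) :
    Fintype.card F ≤ 2 * #(univ.image fun x => α * x ^ 2 + γ) := by
  have hdeg : (C α * X ^ 2 + C γ).natDegree = 2 := by compute_degree!
  have h := FiniteField.card_image_polynomial_eval (p := C α * X ^ 2 + C γ)
    (by rw [← natDegree_pos_iff_degree_pos, hdeg]; norm_num)
  simpa [hdeg] using h

theorem horizontal_intersection_numbers_general (p : ℕ) [Fact p.Prime]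
    (α γ : ZMod p) (hα : α ≠ 0) :
    (p + 1) / 2 ≤
      (Finset.univ.image (parabolaProj p (fun x => α * x ^ 2 + γ) 0)).card := by
  have hvalues := card_le_two_mul_card_image_quadratic hα γ
  have hproj := card_image_le_card_image_parabolaProj_zero fun x => α * x ^ 2 + γ
  rw [ZMod.card] at hvalues
  omega

/-- The horizontal lines intersect the set of points below the parabola `Y = αX² + γ` in
at least `(p+1)/2` different numbers of points. -/
theorem horizontal_intersection_numbers (p : ℕ) [Fact p.Prime] (hp : 2 < p)
    (α γ : ZMod p) (hα : α ≠ 0) :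
    (p + 1) / 2 ≤
      (Finset.univ.image (parabolaProj p (fun x => α * x ^ 2 + γ) 0)).card :=
  horizontal_intersection_numbers_general p α γ hα
end

section
/- Let p > 2 be a prime, let α, γ ∈ F_p with α ≠ 0, set f(X) = αX² + γ, and let S = {(x,y) ∈ F_p² : y < f(x)}. Then the set of intersection numbers of the horizontal lines with S contains at most one pair of consecutive integers; that is, letting I = {#{x ∈ F_p : b < f(x)} : b ∈ F_p} ⊆ ℕ, there is at most one natural number k with both k ∈ I and k+1 ∈ I. -/
section aux
variable {p : ℕ} [Fact p.Prime]

/-- count of x with j < val (f x) -/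
private def Mc (α γ : ZMod p) (j : ℕ) : ℕ :=
  (Finset.univ.filter fun x : ZMod p => j < (α * x ^ 2 + γ).val).card

private def Fc (α γ : ZMod p) (c : ℕ) : ℕ :=
  (Finset.univ.filter fun x : ZMod p => (α * x ^ 2 + γ).val = c).card

private lemma Mc_anti (α γ : ZMod p) {i j : ℕ} (h : i ≤ j) : Mc α γ j ≤ Mc α γ i := by
  apply Finset.card_le_card
  intro x hx
  simp only [Finset.mem_filter, Finset.mem_univ, true_and] at *
  omega

private lemma Mc_step (α γ : ZMod p) (j : ℕ) :
    Mc α γ j = Mc α γ (j + 1) + Fc α γ (j + 1) := by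
  unfold Mc Fc
  rw [← Finset.card_union_of_disjoint]
  · congr 1
    ext x
    simp only [Finset.mem_filter, Finset.mem_univ, true_and, Finset.mem_union]
    omega
  · rw [Finset.disjoint_filter]
    intro x _ h
    omega

private lemma Fc_eq_one (hp : 2 < p) {α : ZMod p} (γ : ZMod p) (hα : α ≠ 0) {c : ℕ}
    (h : Fc α γ c = 1) : c = γ.val := by
  unfold Fc at h
  obtain ⟨x, hx⟩ := Finset.card_eq_one.mp h
  have hxm : x ∈ ({x} : Finset (ZMod p)) := Finset.mem_singleton_self x
  rw [← hx, Finset.mem_filter] at hxm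
  have hnx : -x ∈ Finset.univ.filter fun y : ZMod p => (α * y ^ 2 + γ).val = c := by
    simp only [Finset.mem_filter, Finset.mem_univ, true_and]
    simpa [neg_pow] using hxm.2
  rw [hx, Finset.mem_singleton] at hnx
  have h2 : (2 : ZMod p) ≠ 0 := by
    intro h2
    have : ((2 : ℕ) : ZMod p) = 0 := by push_cast; exact h2
    have := (ZMod.natCast_eq_zero_iff 2 p).mp this
    have := Nat.le_of_dvd (by norm_num) this
    omega
  have hx0 : x = 0 := by
    have : (2 : ZMod p) * x = 0 := by
      have : x + x = 0 := by linear_combination -hnx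
      linear_combination this
    rcases mul_eq_zero.mp this with h | h
    · exact absurd h h2
    · exact h
  have := hxm.2
  rw [hx0] at this
  simpa using this.symm

private lemma consecutive_pin (hp : 2 < p) {α γ : ZMod p} (hα : α ≠ 0) {k : ℕ}
    (ha : ∃ a, Mc α γ a = k + 1) (hb : ∃ b, Mc α γ b = k) : k = Mc α γ γ.val := by
  obtain ⟨a, ha⟩ := ha
  obtain ⟨b, hb⟩ := hb
  have hab : a < b := by
    by_contra h
    push_neg at h
    have := Mc_anti α γ h
    omega
  set T := (Finset.range b).filter (fun j => k + 1 ≤ Mc α γ j) with hT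
  have haT : a ∈ T := by
    simp only [hT, Finset.mem_filter, Finset.mem_range]
    omega
  have hTne : T.Nonempty := ⟨a, haT⟩
  set j := T.max' hTne with hj
  have hjT : j ∈ T := T.max'_mem hTne
  simp only [hT, Finset.mem_filter, Finset.mem_range] at hjT
  have haj : a ≤ j := T.le_max' a haT
  have hMj : Mc α γ j = k + 1 := by
    have := Mc_anti α γ haj
    omega
  have hMj1 : Mc α γ (j + 1) = k := by
    rcases eq_or_lt_of_le (Nat.succ_le_of_lt hjT.1) with h | h
    · rw [Nat.succ_eq_add_one] at h; rw [h]; exact hb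
    · have hnot : j + 1 ∉ T := fun hm => by
        have := T.le_max' _ hm
        omega
      simp only [hT, Finset.mem_filter, Finset.mem_range] at hnot
      have h1 : ¬ (k + 1 ≤ Mc α γ (j + 1)) := fun hle => hnot ⟨h, hle⟩
      have h2 : Mc α γ b ≤ Mc α γ (j + 1) := Mc_anti α γ (by omega)
      omega
  have hstep := Mc_step α γ j
  have hF : Fc α γ (j + 1) = 1 := by omega
  have := Fc_eq_one hp γ hα hF
  rw [← this]
  exact hMj1.symm

end aux

/-- The set of intersection numbers of the horizontal lines with the set of points below
the parabola `Y = αX² + γ` contains at most one pair of consecutive integers. -/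
theorem horizontal_intersection_consecutive (p : ℕ) [Fact p.Prime] (hp : 2 < p)
    (α γ : ZMod p) (hα : α ≠ 0) (k₁ k₂ : ℕ)
    (h₁ : k₁ ∈ Finset.univ.image (parabolaProj p (fun x => α * x ^ 2 + γ) 0))
    (h₁' : k₁ + 1 ∈ Finset.univ.image (parabolaProj p (fun x => α * x ^ 2 + γ) 0))
    (h₂ : k₂ ∈ Finset.univ.image (parabolaProj p (fun x => α * x ^ 2 + γ) 0))
    (h₂' : k₂ + 1 ∈ Finset.univ.image (parabolaProj p (fun x => α * x ^ 2 + γ) 0)) :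
    k₁ = k₂ := by
  simp only [Finset.mem_image, Finset.mem_univ, true_and, parabolaProj, zero_mul,
    zero_add] at h₁ h₁' h₂ h₂'
  obtain ⟨b₁, hb₁⟩ := h₁
  obtain ⟨b₁', hb₁'⟩ := h₁'
  obtain ⟨b₂, hb₂⟩ := h₂
  obtain ⟨b₂', hb₂'⟩ := h₂'
  have e₁ : k₁ = Mc α γ γ.val :=
    consecutive_pin hp hα ⟨b₁'.val, hb₁'⟩ ⟨b₁.val, hb₁⟩
  have e₂ : k₂ = Mc α γ γ.val :=
    consecutive_pin hp hα ⟨b₂'.val, hb₂'⟩ ⟨b₂.val, hb₂⟩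
  rw [e₁, e₂]
end

section
/- Let p ≥ 97 be a prime and fix a non-square α ∈ F_p. Consider the family of quadratic polynomials F = {X² + γ : γ ∈ F_p} ∪ {αX² + γ : γ ∈ F_p} (a family of 2p polynomials). Then the 2p sets S_f = {(x,y) ∈ F_p² : y < f(x)}, for f ∈ F, are pairwise non-isomorphic under affine transformations: for distinct f, g ∈ F there is no bijective affine map T(v) = Av + c of F_p² (with A an invertible 2×2 matrix over F_p and c ∈ F_p²) such that T(S_f) = S_g. -/
/-!
An affine map `T` with `T(S_f) = S_g` sends the top row `y = p - 1`, which misses `S_f`, to a line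
missing `S_g`. But a quadratic `q` exceeds every line `y = d x + δ` with `d ≠ 0` somewhere:
otherwise the integers `ν (q i)`, `i ≤ 4`, are so small that their third differences vanish while
their second difference is `≡ 2 a ≢ 0 (mod p)`, and they cannot stay that small. Applied to `T`
and `T⁻¹`, this leaves the shears `(x, y) ↦ (a x + b y + c₁, e y + c₂)` and the swaps
`(x, y) ↦ (b y + c₁, d x + c₂)`.

For a swap, counting the points of `S_f` on a horizontal line shows that a quadratic agrees mod `p`
with `m ↦ #{x | m < ν (f x)}`, which decreases by at most two per step; the same integer-lift
argument rules this out. For a shear with `b ≠ 0`, a superlevel set `{x | y < f x}` is symmetric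
about the vertex of `f` and, through `g`, about a point depending injectively on `y`; if the two
centres differ the set is periodic, hence trivial, so at most one level of `f` is nontrivial, which
is false. For `b = 0`, counting on vertical lines gives `f x = g (a x + c₁)`, and comparing
coefficients, using that `α` is not a square, gives `f = g`.
-/

open Finset

section

variable {K : Type*} [Field K]

def IsQuadratic (q : K → K) : Prop :=
  ∃ a b c : K, a ≠ 0 ∧ ∀ x, q x = a * x ^ 2 + b * x + c

namespace IsQuadratic

variable {q : K → K}

theorem comp_affine (hq : IsQuadratic q) {u : K} (hu : u ≠ 0) (v : K) :
    IsQuadratic fun x => q (u * x + v) := by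
  obtain ⟨a, b, c, ha, hq⟩ := hq
  exact ⟨a * u ^ 2, 2 * a * u * v + b * u, a * v ^ 2 + b * v + c,
    mul_ne_zero ha (pow_ne_zero 2 hu), fun x => by simp only [hq]; ring⟩

theorem exists_reflect (hq : IsQuadratic q) : ∃ s, ∀ x, q (s - x) = q x := by
  obtain ⟨a, b, c, ha, hq⟩ := hq
  refine ⟨-b / a, fun x => ?_⟩
  rw [hq, hq]
  field_simp
  ring

open Polynomial in
theorem card_filter_eq_le_two [Fintype K] [DecidableEq K] (hq : IsQuadratic q) (w : K) :
    #{x | q x = w} ≤ 2 := by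
  obtain ⟨a, b, c, ha, hq⟩ := hq
  have hdeg := natDegree_quadratic (b := b) (c := c - w) ha
  refine hdeg ▸ card_le_degree_of_subset_roots fun x hx => ?_
  have hx : q x = w := by simpa using hx
  rw [mem_roots (ne_zero_of_natDegree_gt (hdeg ▸ two_pos))]
  simp only [IsRoot, eval_add, eval_mul, eval_C, eval_pow, eval_X]
  linear_combination (hq x).symm.trans hx

end IsQuadratic

end

section

variable {p : ℕ} [Fact p.Prime]

theorem ZMod.val_le_val_neg_one {n : ℕ} [NeZero n] (z : ZMod n) : z.val ≤ (-1 : ZMod n).val := by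
  obtain ⟨m, rfl⟩ := Nat.exists_eq_succ_of_ne_zero (NeZero.ne n)
  rw [ZMod.val_neg_one]
  exact Nat.le_of_lt_succ z.val_lt

theorem ZMod.card_filter_val_lt_val {n : ℕ} [NeZero n] (z : ZMod n) :
    #{y : ZMod n | y.val < z.val} = z.val := by
  conv_rhs => rw [← card_range z.val]
  refine card_nbij' ZMod.val (fun m => (m : ZMod n)) (fun y hy => by simpa using hy)
    (fun m hm => ?_) (fun y _ => ZMod.natCast_zmod_val y) (fun m hm => ?_)
  all_goals
    have hm : m < z.val := by simpa using hm
    have hmn : m < n := hm.trans z.val_lt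
  · simpa [ZMod.val_natCast_of_lt hmn] using hm
  · exact ZMod.val_natCast_of_lt hmn

theorem ZMod.card_filter_val_mul_add_lt_val {e : ZMod p} (he : e ≠ 0) (ρ z : ZMod p) :
    #{y | (e * y + ρ).val < z.val} = z.val := by
  refine .trans ?_ (ZMod.card_filter_val_lt_val z)
  exact card_equiv ((Equiv.mulLeft₀ e he).trans (Equiv.addRight ρ)) (by simp)

theorem ZMod.apply_eq_of_reflections {β : Type*} {P : ZMod p → β} {r s : ZMod p} (hrs : r ≠ s)
    (hr : ∀ x, P (r - x) = P x) (hs : ∀ x, P (s - x) = P x) (x y : ZMod p) : P x = P y := by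
  have hper : Function.Periodic P (r - s) := fun x => by
    rw [← hs x, ← hr (s - x)]
    ring_nf
  have h := hper.nat_mul ((y - x) / (r - s)).val x
  rwa [ZMod.natCast_zmod_val, div_mul_cancel₀ _ (sub_ne_zero.2 hrs), add_sub_cancel, eq_comm] at h

theorem ZMod.two_ne_zero (hp : p ≠ 2) : (2 : ZMod p) ≠ 0 :=
  Ring.two_ne_zero (by rwa [ZMod.ringChar_zmod_n])

end

section

variable {p : ℕ} [Fact p.Prime] {q : ZMod p → ZMod p}

namespace IsQuadratic

theorem exists_secondDiff_eq_of_intLift (hp : p ≠ 2) (hq : IsQuadratic q) {n : ℕ → ℤ}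
    (hn : ∀ i < 5, (n i : ZMod p) = q i)
    (hsmall : ∀ i < 2, |n (i + 3) - 3 * n (i + 2) + 3 * n (i + 1) - n i| < p) :
    ∃ c ≠ 0, ∀ i < 3, n (i + 2) - n (i + 1) = n (i + 1) - n i + c := by
  obtain ⟨a, b, c, ha, hq⟩ := hq
  have e0 := (hn 0 (by norm_num)).trans (hq _)
  have e1 := (hn 1 (by norm_num)).trans (hq _)
  have e2 := (hn 2 (by norm_num)).trans (hq _)
  have e3 := (hn 3 (by norm_num)).trans (hq _)
  have e4 := (hn 4 (by norm_num)).trans (hq _)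
  push_cast at e0 e1 e2 e3 e4
  have eq_zero (m : ℤ) (hm : (m : ZMod p) = 0) (hmp : |m| < p) : m = 0 :=
    Int.eq_zero_of_abs_lt_dvd ((ZMod.intCast_zmod_eq_zero_iff_dvd m p).1 hm) hmp
  have h₀ : n 3 - 3 * n 2 + 3 * n 1 - n 0 = 0 :=
    eq_zero _ (by push_cast; linear_combination e3 - 3 * e2 + 3 * e1 - e0) (hsmall 0 (by norm_num))
  have h₁ : n 4 - 3 * n 3 + 3 * n 2 - n 1 = 0 :=
    eq_zero _ (by push_cast; linear_combination e4 - 3 * e3 + 3 * e2 - e1) (hsmall 1 (by norm_num))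
  refine ⟨n 2 - 2 * n 1 + n 0, fun h => ?_, fun i hi => by
    interval_cases i <;> simp only [Nat.reduceAdd] <;> omega⟩
  have h2a : (2 : ZMod p) * a = 0 := by
    have := congrArg (fun m : ℤ => (m : ZMod p)) h
    push_cast at this
    linear_combination this - e2 + 2 * e1 - e0
  exact mul_ne_zero (ZMod.two_ne_zero hp) ha h2a

theorem exists_val_lt_val (hp : 11 ≤ p) (hq : IsQuadratic q) : ∃ z, z.val < (q z).val := by
  by_contra! hle
  have hbound : ∀ i : ℕ, i < 5 → (q i).val ≤ i := fun i hi =>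
    (hle i).trans (ZMod.val_natCast_of_lt (by omega)).le
  obtain ⟨c, hc, hstep⟩ := hq.exists_secondDiff_eq_of_intLift (by omega)
    (n := fun i => (q i).val) (fun i _ => by simp) (fun i hi => by
      have := hbound i (by omega); have := hbound (i + 1) (by omega)
      have := hbound (i + 2) (by omega); have := hbound (i + 3) (by omega)
      rw [abs_lt]; constructor <;> omega)
  have := hbound 0 (by norm_num); have := hbound 1 (by norm_num); have := hbound 2 (by norm_num)
  have := hbound 3 (by norm_num); have := hbound 4 (by norm_num)
  have := hstep 0 (by norm_num); have := hstep 1 (by norm_num); have := hstep 2 (by norm_num)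
  simp only [zero_add, Nat.reduceAdd] at *
  omega

theorem exists_val_mul_add_lt_val (hp : 11 ≤ p) (hq : IsQuadratic q) {d : ZMod p} (hd : d ≠ 0)
    (δ : ZMod p) : ∃ x, (d * x + δ).val < (q x).val := by
  obtain ⟨z, hz⟩ := (hq.comp_affine (inv_ne_zero hd) (-δ / d)).exists_val_lt_val hp
  refine ⟨d⁻¹ * z + -δ / d, ?_⟩
  convert hz using 3
  field_simp
  ring

theorem not_intLift_antitone_of_step_le_two (hp : 5 ≤ p) (hq : IsQuadratic q) {n : ℕ → ℤ}
    (hn : ∀ i < 5, (n i : ZMod p) = q i) :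
    ¬ ∀ i < 4, n (i + 1) ≤ n i ∧ n i ≤ n (i + 1) + 2 := by
  intro hstep
  obtain ⟨c, hc, hdiff⟩ := hq.exists_secondDiff_eq_of_intLift (by omega) hn (fun i hi => by
    have := hstep i (by omega); have := hstep (i + 1) (by omega); have := hstep (i + 2) (by omega)
    simp only [add_assoc, Nat.reduceAdd] at *
    rw [abs_lt]; constructor <;> omega)
  have := hstep 0 (by norm_num); have := hstep 1 (by norm_num)
  have := hstep 2 (by norm_num); have := hstep 3 (by norm_num)
  have := hdiff 0 (by norm_num); have := hdiff 1 (by norm_num); have := hdiff 2 (by norm_num)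
  simp only [zero_add, Nat.reduceAdd] at *
  omega

theorem card_filter_lt_val_succ (hq : IsQuadratic q) (m : ℕ) :
    #{x | m + 1 < (q x).val} ≤ #{x | m < (q x).val} ∧
      #{x | m < (q x).val} ≤ #{x | m + 1 < (q x).val} + 2 := by
  refine ⟨card_le_card fun x hx => by simp at hx ⊢; omega, ?_⟩
  calc #{x | m < (q x).val}
      ≤ #(univ.filter (fun x => m + 1 < (q x).val) ∪
          univ.filter (fun x => q x = (m + 1 : ℕ))) := by
        refine card_le_card fun x hx => ?_
        simp only [mem_filter, mem_univ, true_and, mem_union] at hx ⊢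
        refine (lt_or_ge (m + 1) (q x).val).imp_right fun hle => ?_
        rw [← ZMod.natCast_zmod_val (q x)]
        congr 1
        omega
    _ ≤ #{x | m + 1 < (q x).val} + 2 :=
        (card_union_le _ _).trans (Nat.add_le_add_left (hq.card_filter_eq_le_two _) _)

theorem exists_ne_val_lt_val (hp : 5 ≤ p) (hq : IsQuadratic q) :
    ∃ x₁ x₂ x₃, q x₁ ≠ q x₂ ∧ (q x₁).val < (q x₃).val ∧ (q x₂).val < (q x₃).val := by
  have hcard : 2 < #(univ.image q) := by
    have := card_le_mul_card_image univ 2 fun w _ => hq.card_filter_eq_le_two w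
    rw [card_univ, ZMod.card] at this
    omega
  obtain ⟨m, hm, hmax⟩ := (univ.image q).exists_max_image ZMod.val (card_pos.1 (by omega))
  obtain ⟨y₁, hy₁, y₂, hy₂, hne⟩ :=
    one_lt_card.1 (by rw [card_erase_of_mem hm]; omega : 1 < #((univ.image q).erase m))
  obtain ⟨x₁, -, rfl⟩ := mem_image.1 (mem_of_mem_erase hy₁)
  obtain ⟨x₂, -, rfl⟩ := mem_image.1 (mem_of_mem_erase hy₂)
  obtain ⟨x₃, -, rfl⟩ := mem_image.1 hm
  exact ⟨x₁, x₂, x₃, hne,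
    (hmax _ (mem_of_mem_erase hy₁)).lt_of_ne ((ZMod.val_injective p).ne (ne_of_mem_erase hy₁)),
    (hmax _ (mem_of_mem_erase hy₂)).lt_of_ne ((ZMod.val_injective p).ne (ne_of_mem_erase hy₂))⟩

end IsQuadratic

end

section

variable {K : Type*} [Field K] {α : K} {f g : K → K}

def parabolaFamily (α : K) : Set (K → K) :=
  {f | (∃ γ, f = fun x => x ^ 2 + γ) ∨ ∃ γ, f = fun x => α * x ^ 2 + γ}

theorem exists_eq_of_mem_parabolaFamily (hf : f ∈ parabolaFamily α) :
    ∃ l γ, (l = 1 ∨ l = α) ∧ ∀ x, f x = l * x ^ 2 + γ := by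
  rcases hf with ⟨γ, rfl⟩ | ⟨γ, rfl⟩
  exacts [⟨1, γ, .inl rfl, fun x => by ring⟩, ⟨α, γ, .inr rfl, fun x => rfl⟩]

theorem isQuadratic_of_mem_parabolaFamily (hα : α ≠ 0) (hf : f ∈ parabolaFamily α) :
    IsQuadratic f := by
  obtain ⟨l, γ, hl, hf⟩ := exists_eq_of_mem_parabolaFamily hf
  refine ⟨l, 0, γ, ?_, fun x => by rw [hf]; ring⟩
  rcases hl with rfl | rfl
  exacts [one_ne_zero, hα]

theorem eq_of_mem_parabolaFamily_of_apply_eq (hα : ¬ IsSquare α) (h2 : (2 : K) ≠ 0)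
    (hf : f ∈ parabolaFamily α) (hg : g ∈ parabolaFamily α) {a c : K} (ha : a ≠ 0)
    (hfg : ∀ x, f x = g (a * x + c)) : f = g := by
  obtain ⟨l₁, γ₁, hl₁, hf⟩ := exists_eq_of_mem_parabolaFamily hf
  obtain ⟨l₂, γ₂, hl₂, hg⟩ := exists_eq_of_mem_parabolaFamily hg
  have hl₂0 : l₂ ≠ 0 := by
    rcases hl₂ with rfl | rfl
    exacts [one_ne_zero, fun h => hα (h ▸ IsSquare.zero)]
  have e (x : K) : l₁ * x ^ 2 + γ₁ = l₂ * (a * x + c) ^ 2 + γ₂ := by rw [← hf, ← hg, hfg]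
  have hc : c = 0 := by
    have : 2 * 2 * l₂ * a * c = 0 := by linear_combination e (-1) - e 1
    simpa [h2, hl₂0, ha] using this
  subst hc
  have hγ : γ₁ = γ₂ := by simpa using e 0
  have hl : l₁ = l₂ * a ^ 2 := by linear_combination e 1 - hγ
  suffices l₁ = l₂ by funext x; rw [hf, hg, this, hγ]
  rcases hl₁ with rfl | rfl <;> rcases hl₂ with rfl | rfl
  · rfl
  · exact absurd ⟨a⁻¹, by field_simp; linear_combination -hl⟩ hα
  · exact absurd ⟨a, by linear_combination hl⟩ hα
  · rfl

end

section

variable {p : ℕ} [Fact p.Prime]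

/-- `S_f` is the preimage of `S_g` under `(x, y) ↦ (a x + b y + c₁, d x + e y + c₂)`. -/
def BelowPreimage (f g : ZMod p → ZMod p) (a b c₁ d e c₂ : ZMod p) : Prop :=
  ∀ x y : ZMod p, y.val < (f x).val ↔ (d * x + e * y + c₂).val < (g (a * x + b * y + c₁)).val

theorem belowPreimage_of_image_eq {f g : ZMod p → ZMod p} {M : Matrix (Fin 2) (Fin 2) (ZMod p)}
    (hM : IsUnit M) (c : Fin 2 → ZMod p)
    (hT : (fun v => M.mulVec v + c) '' {v | (v 1).val < (f (v 0)).val} =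
      {v | (v 1).val < (g (v 0)).val}) :
    BelowPreimage f g (M 0 0) (M 0 1) (c 0) (M 1 0) (M 1 1) (c 1) := by
  have hinj : Function.Injective fun v => M.mulVec v + c :=
    (add_left_injective c).comp (Matrix.mulVec_injective_iff_isUnit.2 hM)
  intro x y
  have h := hinj.mem_set_image (s := {v | (v 1).val < (f (v 0)).val}) (a := ![x, y])
  rw [hT] at h
  simpa [Matrix.mulVec, dotProduct, Fin.sum_univ_two, Matrix.vecHead, Matrix.vecTail] using h.symm

namespace BelowPreimage

variable {f g : ZMod p → ZMod p} {a b c₁ d e c₂ : ZMod p}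

theorem a_eq_zero_or_d_eq_zero (h : BelowPreimage f g a b c₁ d e c₂) (hp : 11 ≤ p)
    (hg : IsQuadratic g) : a = 0 ∨ d = 0 := by
  by_contra! had
  obtain ⟨ha, hd⟩ := had
  obtain ⟨x, hx⟩ := (hg.comp_affine ha (c₁ - b)).exists_val_mul_add_lt_val hp hd (c₂ - e)
  have := (h x (-1)).2 (by
    rwa [show d * x + e * -1 + c₂ = d * x + (c₂ - e) by ring,
      show a * x + b * -1 + c₁ = a * x + (c₁ - b) by ring])
  exact (ZMod.val_le_val_neg_one _).not_gt this

theorem d_eq_zero_or_e_eq_zero (h : BelowPreimage f g a b c₁ d e c₂) (hp : 11 ≤ p)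
    (hf : IsQuadratic f) : d = 0 ∨ e = 0 := by
  by_contra! hde
  obtain ⟨hd, he⟩ := hde
  obtain ⟨y, hy⟩ := (hf.comp_affine (div_ne_zero (neg_ne_zero.2 he) hd)
    ((-1 - c₂) / d)).exists_val_lt_val hp
  have := (h _ y).1 hy
  rw [show d * (-e / d * y + (-1 - c₂) / d) + e * y + c₂ = -1 by field_simp; ring] at this
  exact (ZMod.val_le_val_neg_one _).not_gt this

theorem apply_eq_of_b_eq_zero (h : BelowPreimage f g a b c₁ d e c₂) (hb : b = 0) (he : e ≠ 0)
    (x : ZMod p) : f x = g (a * x + c₁) := by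
  apply ZMod.val_injective
  calc (f x).val = #{y : ZMod p | y.val < (f x).val} := (ZMod.card_filter_val_lt_val _).symm
    _ = #{y | (e * y + (d * x + c₂)).val < (g (a * x + c₁)).val} := by
        congr 1
        refine filter_congr fun y _ => ?_
        rw [h x y, hb, zero_mul, add_zero, show d * x + e * y + c₂ = e * y + (d * x + c₂) by ring]
    _ = (g (a * x + c₁)).val := ZMod.card_filter_val_mul_add_lt_val he _ _

theorem false_of_a_eq_zero_of_e_eq_zero (h : BelowPreimage f g a b c₁ d e c₂) (hp : 5 ≤ p)
    (hf : IsQuadratic f) (hg : IsQuadratic g) (ha : a = 0) (he : e = 0) (hb : b ≠ 0)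
    (hd : d ≠ 0) : False := by
  have hcount (y : ZMod p) : #{x | y.val < (f x).val} = (g (b * y + c₁)).val := by
    calc #{x | y.val < (f x).val} = #{x | (d * x + c₂).val < (g (b * y + c₁)).val} := by
          congr 1
          refine filter_congr fun x _ => ?_
          rw [h x y, ha, he]
          ring_nf
      _ = (g (b * y + c₁)).val := ZMod.card_filter_val_mul_add_lt_val hd _ _
  refine (hg.comp_affine hb c₁).not_intLift_antitone_of_step_le_two hp
    (n := fun i => #{x | i < (f x).val}) (fun i hi => ?_) (fun i _ => ?_)
  · have := hcount i
    rw [ZMod.val_natCast_of_lt (by omega)] at this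
    simp [this]
  · have := hf.card_filter_lt_val_succ i
    omega

theorem false_of_d_eq_zero_of_b_ne_zero (h : BelowPreimage f g a b c₁ d e c₂) (hp : 5 ≤ p)
    (hf : IsQuadratic f) (hg : IsQuadratic g) (ha : a ≠ 0) (hb : b ≠ 0) (hd : d = 0) :
    False := by
  obtain ⟨s, hs⟩ := hf.exists_reflect
  obtain ⟨t, ht⟩ := hg.exists_reflect
  obtain ⟨x₁, x₂, x₃, hne, h₁, h₂⟩ := hf.exists_ne_val_lt_val hp
  -- `{x | f x₀ < f x}` is invariant under `x ↦ s - x` and `x ↦ r - x`, hence periodic if `r ≠ s`.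
  have centre (x₀ : ZMod p) (h₀ : (f x₀).val < (f x₃).val) :
      (t - 2 * (b * f x₀ + c₁)) / a = s := by
    by_contra hrs
    set r := (t - 2 * (b * f x₀ + c₁)) / a
    have hr (x : ZMod p) : ((f x₀).val < (f (r - x)).val) = ((f x₀).val < (f x).val) := by
      rw [h, h, hd, ← ht (a * x + b * f x₀ + c₁)]
      simp only [zero_mul, zero_add, r]
      congr 4
      field_simp
      ring
    have hsym (x : ZMod p) : ((f x₀).val < (f (s - x)).val) = ((f x₀).val < (f x).val) := by
      rw [hs]
    have := ZMod.apply_eq_of_reflections (P := fun x => (f x₀).val < (f x).val) hrs hr hsym x₃ x₀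
    simp only [h₀, lt_self_iff_false, eq_iff_iff, iff_false, not_true_eq_false] at this
  have := (centre x₁ h₁).trans (centre x₂ h₂).symm
  rw [div_left_inj' ha] at this
  have : 2 * b * (f x₁ - f x₂) = 0 := by linear_combination this.symm
  simp [ZMod.two_ne_zero (p := p) (by omega), hb, sub_eq_zero, hne] at this

end BelowPreimage

end

/-- For `p ≥ 97` prime and `α` a fixed non-square, the `2p` sets of points below the
parabolas `Y = X² + γ` and `Y = αX² + γ` (for `γ ∈ F_p`) are pairwise non-isomorphic
under affine transformations of the plane. -/
theorem below_parabola_family_nonisomorphic (p : ℕ) [Fact p.Prime] (hp : 97 ≤ p)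
    (α : ZMod p) (hα : ¬ IsSquare α)
    (f g : ZMod p → ZMod p)
    (hf : (∃ γ : ZMod p, f = fun x => x ^ 2 + γ) ∨
          (∃ γ : ZMod p, f = fun x => α * x ^ 2 + γ))
    (hg : (∃ γ : ZMod p, g = fun x => x ^ 2 + γ) ∨
          (∃ γ : ZMod p, g = fun x => α * x ^ 2 + γ))
    (hfg : f ≠ g) :
    ¬ ∃ (A : GL (Fin 2) (ZMod p)) (c : Fin 2 → ZMod p),
      (fun v : Fin 2 → ZMod p => (A : Matrix (Fin 2) (Fin 2) (ZMod p)).mulVec v + c) ''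
          {v : Fin 2 → ZMod p | (v 1).val < (f (v 0)).val} =
        {v : Fin 2 → ZMod p | (v 1).val < (g (v 0)).val} := by
  rintro ⟨A, c, hT⟩
  have hα0 : α ≠ 0 := fun h => hα (h ▸ IsSquare.zero)
  have hfq := isQuadratic_of_mem_parabolaFamily hα0 hf
  have hgq := isQuadratic_of_mem_parabolaFamily hα0 hg
  have h := belowPreimage_of_image_eq A.isUnit c hT
  set M : Matrix (Fin 2) (Fin 2) (ZMod p) := ↑A
  have hdet : M 0 0 * M 1 1 - M 0 1 * M 1 0 ≠ 0 := by
    rw [← Matrix.det_fin_two]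
    exact ((Matrix.isUnit_iff_isUnit_det M).1 A.isUnit).ne_zero
  rcases h.a_eq_zero_or_d_eq_zero (by omega) hgq with ha | hd
  · have hb : M 0 1 ≠ 0 := fun hb => hdet (by simp [ha, hb])
    have hd : M 1 0 ≠ 0 := fun hd => hdet (by simp [ha, hd])
    have he := (h.d_eq_zero_or_e_eq_zero (by omega) hfq).resolve_left hd
    exact h.false_of_a_eq_zero_of_e_eq_zero (by omega) hfq hgq ha he hb hd
  · have ha : M 0 0 ≠ 0 := fun ha => hdet (by simp [ha, hd])
    have he : M 1 1 ≠ 0 := fun he => hdet (by simp [he, hd])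
    by_cases hb : M 0 1 = 0
    · exact hfg (eq_of_mem_parabolaFamily_of_apply_eq hα (ZMod.two_ne_zero (by omega)) hf hg ha
        (h.apply_eq_of_b_eq_zero hb he))
    · exact h.false_of_d_eq_zero_of_b_ne_zero (by omega) hfq hgq ha hb hd
end
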